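/- Let K : ℝ → ℝ satisfy assumption (K), let (h_N) be a bandwidth sequence with N/h_N → ζ ∈ [1,∞), let m₀ be a generic alternative, fix a change point q ∈ ℕ (change-point model CP1), and fix a ∈ (0,1). Define μ_N(s) = h_N^{1/2} N^{−3/2} ∑_{i=1}^{⌊Ns⌋} (1/h_N) K((i − ⌊Ns⌋)/h_N) ∑_{j=1}^{i−1} m₀((j − q)/h_N). Then sup_{s ∈ [a,1]} | μ_N(s) − ζ^{−1/2} ∫_0^s K(ζ(r−s)) (∫_0^{ζ r} m₀(t) dt) dr | → 0 as N → ∞. -/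

import Mathlib

/-!
After the shifts `i = k + 1`, `j = j' + 1`, `μ_N(s)` is the left Riemann sum
`(1/N) ∑_{k < ⌊Ns⌋} a_N(k/N, s)` of mesh `1/N`, where
`a_N(r, s) = √(h_N/N) K((Nr + 1 - ⌊Ns⌋)/h_N) · (1/h_N) ∑_{j < ⌊Nr⌋} m₀((j + 1 - q)/h_N)`.
Since `N/h_N → ζ`, the inner sum is itself a Riemann sum, of mesh `1/h_N`, of `∫_0^{ζr} m₀`, and
`a_N(r, s) → ζ^{-1/2} K(ζ(r - s)) ∫_0^{ζr} m₀` uniformly on `[0,1]²`. Riemann sums of a uniformly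
convergent family with continuous limit converge uniformly in the upper limit `s`, by uniform
continuity of the limit on the compact square.
-/

open MeasureTheory Filter Topology Set

lemma abs_mul_sub_integral_le {f : ℝ → ℝ} {u v ε : ℝ} (huv : u ≤ v)
    (hf : IntervalIntegrable f volume u v) (hε : ∀ x ∈ Icc u v, |f x - f u| ≤ ε) :
    |(v - u) * f u - ∫ x in u..v, f x| ≤ (v - u) * ε := by
  have hsub : (v - u) * f u - ∫ x in u..v, f x = ∫ x in u..v, (f u - f x) := by
    rw [intervalIntegral.integral_sub intervalIntegrable_const hf,
      intervalIntegral.integral_const, smul_eq_mul]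
  have hbound : ∀ x ∈ uIoc u v, ‖f u - f x‖ ≤ ε := fun x hx => by
    rw [uIoc_of_le huv] at hx
    rw [Real.norm_eq_abs, abs_sub_comm]
    exact hε x (Ioc_subset_Icc_self hx)
  have := intervalIntegral.norm_integral_le_of_norm_le_const hbound
  rwa [Real.norm_eq_abs, abs_of_nonneg (sub_nonneg.2 huv), mul_comm, ← hsub] at this

lemma abs_riemannSum_sub_integral_le {f : ℝ → ℝ} (hf : Continuous f) {δ ε : ℝ} (hδ : 0 ≤ δ)
    (n : ℕ) (hmod : ∀ x ∈ Icc 0 (n * δ), ∀ y ∈ Icc 0 (n * δ), |x - y| ≤ δ → |f x - f y| ≤ ε) :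
    |δ * ∑ k ∈ Finset.range n, f (k * δ) - ∫ x in 0..n * δ, f x| ≤ n * δ * ε := by
  have hsplit := intervalIntegral.sum_integral_adjacent_intervals (μ := volume)
    (a := fun k : ℕ => k * δ) (n := n) fun k _ => hf.intervalIntegrable _ _
  simp only [Nat.cast_zero, zero_mul, Nat.cast_add, Nat.cast_one] at hsplit
  rw [← hsplit, Finset.mul_sum, ← Finset.sum_sub_distrib]
  refine (Finset.abs_sum_le_sum_abs _ _).trans ?_
  calc ∑ k ∈ Finset.range n, |δ * f (k * δ) - ∫ x in k * δ..(k + 1) * δ, f x|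
      ≤ ∑ _k ∈ Finset.range n, δ * ε := Finset.sum_le_sum fun k hk => ?_
    _ = n * δ * ε := by simp [mul_assoc]
  have hkn : (k : ℝ) + 1 ≤ n := by exact_mod_cast Finset.mem_range.1 hk
  have hIcc : Icc (k * δ) ((k + 1) * δ) ⊆ Icc 0 (n * δ) :=
    Icc_subset_Icc (by positivity) (mul_le_mul_of_nonneg_right hkn hδ)
  have hle : (k : ℝ) * δ ≤ (k + 1) * δ := by nlinarith
  have hpiece := abs_mul_sub_integral_le hle (hf.intervalIntegrable _ _) fun x hx =>
    hmod x (hIcc hx) _ (hIcc (left_mem_Icc.2 hle)) (by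
      rw [abs_of_nonneg (by linarith [hx.1])]; linarith [hx.2])
  simpa [add_mul, add_sub_cancel_left] using hpiece

lemma tendstoUniformlyOn_of_abs_sub_le {ι α : Type*} {l : Filter ι} {F : ι → α → ℝ}
    {f : α → ℝ} {s : Set α} {u : ι → ℝ} (hu : Tendsto u l (𝓝 0))
    (hFu : ∀ᶠ n in l, ∀ x ∈ s, |F n x - f x| ≤ u n) : TendstoUniformlyOn F f l s := by
  rw [Metric.tendstoUniformlyOn_iff]
  intro ε hε
  filter_upwards [hFu, hu.eventually (gt_mem_nhds hε)] with n hn hun x hx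
  rw [Real.dist_eq, abs_sub_comm]
  exact (hn x hx).trans_lt hun

lemma TendstoUniformlyOn.mul_of_bounded {ι α : Type*} {l : Filter ι} {F G : ι → α → ℝ}
    {f g : α → ℝ} {s : Set α} (hF : TendstoUniformlyOn F f l s) (hG : TendstoUniformlyOn G g l s)
    (hf : ∃ A, ∀ x ∈ s, |f x| ≤ A) (hg : ∃ B, ∀ x ∈ s, |g x| ≤ B) :
    TendstoUniformlyOn (fun n x => F n x * G n x) (fun x => f x * g x) l s := by
  obtain ⟨A, hA⟩ := hf
  obtain ⟨B, hB⟩ := hg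
  rw [Metric.tendstoUniformlyOn_iff] at hF hG ⊢
  intro ε hε
  set C := |A| + |B| + 1
  have hC : 0 < C := by positivity
  set η := min 1 (ε / (2 * C))
  have hη : 0 < η := by positivity
  filter_upwards [hF η hη, hG η hη] with n hFn hGn x hx
  have hF' : |F n x - f x| ≤ η := by rw [abs_sub_comm, ← Real.dist_eq]; exact (hFn x hx).le
  have hG' : |G n x - g x| ≤ η := by rw [abs_sub_comm, ← Real.dist_eq]; exact (hGn x hx).le
  have hFbdd : |F n x| ≤ |A| + 1 := by
    have := abs_sub_abs_le_abs_sub (F n x) (f x)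
    linarith [min_le_left 1 (ε / (2 * C)), hA x hx, le_abs_self A]
  have hηC : C * η ≤ ε / 2 := by
    have := min_le_right 1 (ε / (2 * C))
    calc C * η ≤ C * (ε / (2 * C)) := by gcongr
      _ = ε / 2 := by field_simp
  rw [Real.dist_eq, abs_sub_comm]
  calc |F n x * G n x - f x * g x| = |F n x * (G n x - g x) + (F n x - f x) * g x| := by ring_nf
    _ ≤ |F n x| * |G n x - g x| + |F n x - f x| * |g x| := by
        rw [← abs_mul, ← abs_mul]; exact abs_add_le _ _
    _ ≤ (|A| + 1) * η + η * |B| :=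
        add_le_add (mul_le_mul hFbdd hG' (abs_nonneg _) (by positivity))
          (mul_le_mul hF' ((hB x hx).trans (le_abs_self B)) (abs_nonneg _) hη.le)
    _ = C * η := by ring
    _ < ε := by linarith

lemma Continuous.tendstoUniformlyOn_of_tendsto {ι P X Y : Type*} [UniformSpace P]
    [WeaklyLocallyCompactSpace P] [UniformSpace X] [UniformSpace Y] {f : P → X → Y}
    (hf : Continuous ↿f) {s : Set X} (hs : IsCompact s) {l : Filter ι} {p : ι → P} {p₀ : P}
    (hp : Tendsto p l (𝓝 p₀)) : TendstoUniformlyOn (fun n => f (p n)) (f p₀) l s := by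
  obtain ⟨U, hU, hp₀U⟩ := exists_compact_mem_nhds p₀
  have hfU := ((hU.prod hs).uniformContinuousOn_of_continuous hf.continuousOn).tendstoUniformlyOn
    (mem_of_mem_nhds hp₀U)
  rw [nhdsWithin_eq_nhds.2 hp₀U] at hfU
  exact fun u hu => hp.eventually (hfU u hu)

lemma abs_riemannSum_natFloor_sub_integral_le {f : ℝ → ℝ} (hf : Continuous f) {N : ℕ}
    (hN : N ≠ 0) {s ε C : ℝ} (hs : 0 ≤ s) (hC : ∀ x ∈ Icc 0 s, |f x| ≤ C)
    (hmod : ∀ x ∈ Icc 0 s, ∀ y ∈ Icc 0 s, |x - y| ≤ 1 / N → |f x - f y| ≤ ε) :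
    |(1 / N : ℝ) * ∑ i ∈ Finset.range ⌊(N : ℝ) * s⌋₊, f (i / N) - ∫ x in 0..s, f x|
      ≤ s * ε + C * (1 / N) := by
  have hN' : (0 : ℝ) < N := by positivity
  set M := ⌊(N : ℝ) * s⌋₊
  have hMs : (M : ℝ) / N ≤ s := by
    rw [div_le_iff₀ hN', mul_comm]; exact Nat.floor_le (by positivity)
  have hsM : s - M / N ≤ 1 / N := by
    rw [sub_le_iff_le_add, ← add_div, le_div_iff₀ hN', mul_comm]
    linarith [Nat.lt_floor_add_one ((N : ℝ) * s)]
  have hε : 0 ≤ ε := (abs_nonneg _).trans (hmod 0 ⟨le_rfl, hs⟩ 0 ⟨le_rfl, hs⟩ (by simp))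
  have hriemann : |(1 / N : ℝ) * ∑ i ∈ Finset.range M, f (i / N) - ∫ x in 0..(M / N : ℝ), f x|
      ≤ s * ε := by
    have := abs_riemannSum_sub_integral_le hf (by positivity) M fun x hx y hy =>
      hmod x ⟨hx.1, (mul_one_div (M : ℝ) N ▸ hx.2).trans hMs⟩
        y ⟨hy.1, (mul_one_div (M : ℝ) N ▸ hy.2).trans hMs⟩
    simp only [mul_one_div] at this
    exact this.trans (mul_le_mul_of_nonneg_right hMs hε)
  have hrest : |∫ x in (M / N : ℝ)..s, f x| ≤ C * (1 / N) := by
    have hbound : ∀ x ∈ uIoc (M / N : ℝ) s, ‖f x‖ ≤ C := fun x hx => by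
      rw [uIoc_of_le hMs] at hx
      exact hC x ⟨(by positivity : (0 : ℝ) ≤ M / N).trans hx.1.le, hx.2⟩
    have := intervalIntegral.norm_integral_le_of_norm_le_const hbound
    rw [Real.norm_eq_abs, abs_of_nonneg (sub_nonneg.2 hMs)] at this
    exact this.trans (mul_le_mul_of_nonneg_left hsM ((abs_nonneg _).trans (hC s ⟨hs, le_rfl⟩)))
  rw [← intervalIntegral.integral_add_adjacent_intervals (hf.intervalIntegrable 0 (M / N))
    (hf.intervalIntegrable (M / N) s)]
  calc _ = |((1 / N : ℝ) * ∑ i ∈ Finset.range M, f (i / N) - ∫ x in 0..(M / N : ℝ), f x)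
        - ∫ x in (M / N : ℝ)..s, f x| := by ring_nf
    _ ≤ s * ε + C * (1 / N) := (abs_sub _ _).trans (add_le_add hriemann hrest)

lemma tendstoUniformlyOn_riemannSum {Φ : ℝ × ℝ → ℝ} (hΦ : Continuous Φ) :
    TendstoUniformlyOn
      (fun (N : ℕ) (s : ℝ) => (1 / N : ℝ) * ∑ i ∈ Finset.range ⌊(N : ℝ) * s⌋₊, Φ (i / N, s))
      (fun s => ∫ r in 0..s, Φ (r, s)) atTop (Icc 0 1) := by
  have hQ : IsCompact (Icc (0 : ℝ) 1 ×ˢ Icc (0 : ℝ) 1) := isCompact_Icc.prod isCompact_Icc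
  obtain ⟨C, hC⟩ := hQ.exists_bound_of_continuousOn hΦ.continuousOn
  have hunif := hQ.uniformContinuousOn_of_continuous hΦ.continuousOn
  rw [Metric.uniformContinuousOn_iff] at hunif
  rw [Metric.tendstoUniformlyOn_iff]
  intro ε hε
  obtain ⟨δ, hδ, hmod⟩ := hunif (ε / 2) (half_pos hε)
  have h1N : Tendsto (fun N : ℕ => (1 / N : ℝ)) atTop (𝓝 0) := tendsto_one_div_atTop_nhds_zero_nat
  have hC1N : Tendsto (fun N : ℕ => C * (1 / N : ℝ)) atTop (𝓝 0) := by
    simpa using h1N.const_mul C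
  filter_upwards [h1N.eventually (gt_mem_nhds hδ), hC1N.eventually (gt_mem_nhds (half_pos hε)),
    eventually_ne_atTop 0] with N hNδ hNC hN0 s hs
  have hsub : Icc 0 s ⊆ Icc 0 1 := Icc_subset_Icc_right hs.2
  have hbound := abs_riemannSum_natFloor_sub_integral_le (f := fun r => Φ (r, s)) (by fun_prop)
    hN0 (ε := ε / 2) (C := C) hs.1 (fun x hx => hC (x, s) ⟨hsub hx, hs⟩)
    fun x hx y hy hxy => by
      have := hmod (x, s) ⟨hsub hx, hs⟩ (y, s) ⟨hsub hy, hs⟩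
        (by rw [Prod.dist_eq, dist_self, Real.dist_eq]; simpa using hxy.trans_lt hNδ)
      exact (Real.dist_eq _ _ ▸ this).le
  rw [Real.dist_eq, abs_sub_comm]
  calc _ ≤ s * (ε / 2) + C * (1 / N) := hbound
    _ < ε := by nlinarith [hs.2]

lemma tendstoUniformlyOn_riemannSum_of_tendstoUniformlyOn {Φ : ℝ × ℝ → ℝ} (hΦ : Continuous Φ)
    {a : ℕ → ℝ × ℝ → ℝ} (ha : TendstoUniformlyOn a Φ atTop (Icc 0 1 ×ˢ Icc 0 1)) :
    TendstoUniformlyOn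
      (fun (N : ℕ) (s : ℝ) => (1 / N : ℝ) * ∑ i ∈ Finset.range ⌊(N : ℝ) * s⌋₊, a N (i / N, s))
      (fun s => ∫ r in 0..s, Φ (r, s)) atTop (Icc 0 1) := by
  have herr : TendstoUniformlyOn (fun (N : ℕ) (s : ℝ) =>
      (1 / N : ℝ) * ∑ i ∈ Finset.range ⌊(N : ℝ) * s⌋₊, (a N (i / N, s) - Φ (i / N, s))) 0 atTop
      (Icc 0 1) := by
    rw [Metric.tendstoUniformlyOn_iff] at ha ⊢
    intro ε hε
    filter_upwards [ha (ε / 2) (half_pos hε)] with N hN s hs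
    have hMN : (⌊(N : ℝ) * s⌋₊ : ℝ) ≤ N := (Nat.floor_le (by have := hs.1; positivity)).trans
      (mul_le_of_le_one_right N.cast_nonneg hs.2)
    have hterm : ∀ i ∈ Finset.range ⌊(N : ℝ) * s⌋₊, |a N (i / N, s) - Φ (i / N, s)| ≤ ε / 2 := by
      intro i hi
      have hiN : (i : ℝ) ≤ N := by
        have : (i : ℝ) < ⌊(N : ℝ) * s⌋₊ := by exact_mod_cast Finset.mem_range.1 hi
        linarith
      have := hN (i / N, s) ⟨⟨by positivity, div_le_one_of_le₀ hiN N.cast_nonneg⟩, hs⟩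
      rw [Real.dist_eq, abs_sub_comm] at this
      exact this.le
    have hsum := (Finset.abs_sum_le_sum_abs _ _).trans (Finset.sum_le_card_nsmul _ _ _ hterm)
    rw [Finset.card_range, nsmul_eq_mul] at hsum
    rw [Pi.zero_apply, dist_zero_left, Real.norm_eq_abs, abs_mul, abs_of_nonneg (by positivity)]
    calc 1 / (N : ℝ) * |∑ i ∈ Finset.range ⌊(N : ℝ) * s⌋₊, (a N (i / N, s) - Φ (i / N, s))|
        ≤ 1 / N * (⌊(N : ℝ) * s⌋₊ * (ε / 2)) := mul_le_mul_of_nonneg_left hsum (by positivity)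
      _ ≤ ε / 2 := by
        rw [← mul_assoc, one_div_mul_eq_div]
        exact mul_le_of_le_one_left (by positivity) (div_le_one_of_le₀ hMN N.cast_nonneg)
      _ < ε := half_lt_self hε
  refine ((tendstoUniformlyOn_riemannSum hΦ).add herr).congr_right ?_ |>.congr ?_
  · intro s _; simp
  · filter_upwards with N s _
    simp [← mul_add]

lemma tendsto_one_div_of_tendsto_natCast_div {h : ℕ → ℝ} {ζ : ℝ}
    (hlim : Tendsto (fun N : ℕ => (N : ℝ) / h N) atTop (𝓝 ζ)) :
    Tendsto (fun N => 1 / h N) atTop (𝓝 0) := by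
  have := hlim.mul tendsto_one_div_atTop_nhds_zero_nat
  rw [mul_zero] at this
  refine this.congr' ?_
  filter_upwards [eventually_ne_atTop 0] with N hN
  field_simp

lemma tendstoUniformlyOn_sum_comp_div {f : ℝ → ℝ} (hf : Continuous f) {h : ℕ → ℝ} {ζ : ℝ}
    (hlim : Tendsto (fun N : ℕ => (N : ℝ) / h N) atTop (𝓝 ζ)) (d : ℝ) :
    TendstoUniformlyOn
      (fun (N : ℕ) (r : ℝ) => 1 / h N * ∑ j ∈ Finset.range ⌊(N : ℝ) * r⌋₊, f ((j + d) / h N))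
      (fun r => ∫ t in 0..ζ * r, f t) atTop (Icc 0 1) := by
  have ha : TendstoUniformlyOn
      (fun (N : ℕ) (p : ℝ × ℝ) => N / h N * f (N / h N * p.1 + d * (1 / h N)))
      (fun p => ζ * f (ζ * p.1)) atTop (Icc 0 1 ×ˢ Icc 0 1) := by
    simpa using Continuous.tendstoUniformlyOn_of_tendsto
      (f := fun (c p : ℝ × ℝ) => c.1 * f (c.1 * p.1 + c.2)) (by fun_prop)
      (isCompact_Icc.prod isCompact_Icc)
      (hlim.prodMk_nhds ((tendsto_one_div_of_tendsto_natCast_div hlim).const_mul d))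
  have := tendstoUniformlyOn_riemannSum_of_tendstoUniformlyOn (by fun_prop) ha
  refine (this.congr_right fun r _ => ?_).congr ?_
  · simp
  · filter_upwards [eventually_ne_atTop 0] with N hN r _
    dsimp only
    rw [Finset.mul_sum, Finset.mul_sum]
    refine Finset.sum_congr rfl fun j _ => ?_
    have hN' : (N : ℝ) ≠ 0 := Nat.cast_ne_zero.2 hN
    rw [show (N : ℝ) / h N * (j / N) + d * (1 / h N) = (j + d) / h N by field_simp]
    field_simp

lemma tendstoUniformlyOn_comp_natFloor_div {K : ℝ → ℝ} {L : ℝ}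
    (hK : ∀ z₁ z₂ : ℝ, |K z₁ - K z₂| ≤ L * |z₁ - z₂|) {h : ℕ → ℝ} {ζ : ℝ}
    (hlim : Tendsto (fun N : ℕ => (N : ℝ) / h N) atTop (𝓝 ζ)) :
    TendstoUniformlyOn
      (fun (N : ℕ) (p : ℝ × ℝ) => K ((N * p.1 + 1 - ⌊(N : ℝ) * p.2⌋₊) / h N))
      (fun p => K (ζ * (p.1 - p.2))) atTop (Icc 0 1 ×ˢ Icc 0 1) := by
  have hL : 0 ≤ L := by simpa using (abs_nonneg _).trans (hK 1 0)
  refine tendstoUniformlyOn_of_abs_sub_le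
    (u := fun N => L * (|N / h N - ζ| + 2 * |1 / h N|)) ?_ ?_
  · simpa using ((hlim.sub_const ζ).abs.add
      ((tendsto_one_div_of_tendsto_natCast_div hlim).abs.const_mul 2)).const_mul L
  · filter_upwards with N ⟨r, s⟩ ⟨⟨hr0, hr1⟩, hs0, hs1⟩
    refine (hK _ _).trans (mul_le_mul_of_nonneg_left ?_ hL)
    set M := ⌊(N : ℝ) * s⌋₊
    have hM : (M : ℝ) ≤ N * s := Nat.floor_le (by positivity)
    have hM' : (N : ℝ) * s < M + 1 := Nat.lt_floor_add_one _
    have hrs : |r - s| ≤ 1 := abs_le.2 ⟨by linarith, by linarith⟩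
    have hfrac : |(N : ℝ) * s - M + 1| ≤ 2 := abs_le.2 ⟨by linarith, by linarith⟩
    calc |(N * r + 1 - M) / h N - ζ * (r - s)|
        = |(N / h N - ζ) * (r - s) + (N * s - M + 1) * (1 / h N)| := by ring_nf
      _ ≤ |N / h N - ζ| * |r - s| + |(N : ℝ) * s - M + 1| * |1 / h N| := by
          rw [← abs_mul, ← abs_mul]; exact abs_add_le _ _
      _ ≤ |N / h N - ζ| * 1 + 2 * |1 / h N| := by gcongr
      _ = |N / h N - ζ| + 2 * |1 / h N| := by ring

lemma sum_Icc_one_eq_sum_range {M : Type*} [AddCommMonoid M] (f : ℕ → M) (n : ℕ) :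
    ∑ i ∈ Finset.Icc 1 n, f i = ∑ k ∈ Finset.range n, f (k + 1) := by
  rw [Finset.range_eq_Ico, Finset.sum_Ico_add' f 0 n 1, zero_add, Finset.Ico_add_one_right_eq_Icc]

lemma rpow_three_halves_eq_mul_sqrt {x : ℝ} (hx : 0 ≤ x) : x ^ ((3 : ℝ) / 2) = x * Real.sqrt x := by
  rw [show (3 : ℝ) / 2 = 1 + 1 / 2 by norm_num, Real.rpow_add' hx (by norm_num), Real.rpow_one,
    Real.sqrt_eq_rpow]

lemma drift_sum_eq_riemannSum (K m₀ : ℝ → ℝ) (h : ℝ) (q : ℕ) {N : ℕ} (hN : N ≠ 0) (M : ℕ) :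
    Real.sqrt h / (N : ℝ) ^ ((3 : ℝ) / 2) *
        ∑ i ∈ Finset.Icc 1 M, (1 / h) * K (((i : ℝ) - M) / h) *
          ∑ j ∈ Finset.Icc 1 (i - 1), m₀ (((j : ℝ) - q) / h)
      = 1 / N * ∑ k ∈ Finset.range M, Real.sqrt (h / N) * K ((N * (k / N) + 1 - M) / h) *
          (1 / h * ∑ j ∈ Finset.range ⌊(N : ℝ) * (k / N)⌋₊, m₀ ((j + (1 - q)) / h)) := by
  have hN' : (N : ℝ) ≠ 0 := Nat.cast_ne_zero.2 hN
  simp only [sum_Icc_one_eq_sum_range, Nat.add_sub_cancel, mul_div_cancel₀ _ hN',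
    Nat.floor_natCast, Finset.mul_sum]
  refine Finset.sum_congr rfl fun k _ => ?_
  rw [rpow_three_halves_eq_mul_sqrt N.cast_nonneg, Real.sqrt_div' _ N.cast_nonneg]
  push_cast
  simp only [add_sub_assoc]
  field_simp

lemma tendstoUniformlyOn_drift_summand {K : ℝ → ℝ} {L : ℝ}
    (hK : ∀ z₁ z₂ : ℝ, |K z₁ - K z₂| ≤ L * |z₁ - z₂|) {h : ℕ → ℝ} {ζ : ℝ} (hζ : 0 < ζ)
    (hlim : Tendsto (fun N : ℕ => (N : ℝ) / h N) atTop (𝓝 ζ)) {m₀ : ℝ → ℝ}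
    (hm₀ : Continuous m₀) (d : ℝ) :
    TendstoUniformlyOn (fun (N : ℕ) (p : ℝ × ℝ) =>
        Real.sqrt (h N / N) * K ((N * p.1 + 1 - ⌊(N : ℝ) * p.2⌋₊) / h N) *
          (1 / h N * ∑ j ∈ Finset.range ⌊(N : ℝ) * p.1⌋₊, m₀ ((j + d) / h N)))
      (fun p => (Real.sqrt ζ)⁻¹ * K (ζ * (p.1 - p.2)) * ∫ t in 0..ζ * p.1, m₀ t) atTop
      (Icc 0 1 ×ˢ Icc 0 1) := by
  have hP : Tendsto (fun N : ℕ => Real.sqrt (h N / N)) atTop (𝓝 (Real.sqrt ζ)⁻¹) := by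
    simpa [inv_div, Real.sqrt_inv] using (hlim.inv₀ hζ.ne').sqrt
  have hKc : Continuous K := (LipschitzWith.of_dist_le' (K := L) hK).continuous
  have hbdd {g : ℝ × ℝ → ℝ} (hg : Continuous g) : ∃ C, ∀ p ∈ Icc (0 : ℝ) 1 ×ˢ Icc 0 1, |g p| ≤ C :=
    (isCompact_Icc.prod isCompact_Icc).exists_bound_of_continuousOn hg.continuousOn
  exact ((hP.tendstoUniformlyOn_const _).mul_of_bounded
    (tendstoUniformlyOn_comp_natFloor_div hK hlim) ⟨_, fun _ _ => le_rfl⟩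
    (hbdd (by fun_prop))).mul_of_bounded
    (((tendstoUniformlyOn_sum_comp_div hm₀ hlim d).comp Prod.fst).mono fun _ hp => hp.1)
    (hbdd (by fun_prop)) (hbdd (by fun_prop))

theorem drift_term_uniform_convergence_CP1_general
    (K : ℝ → ℝ) (L : ℝ)
    (hK_lip : ∀ z₁ z₂ : ℝ, |K z₁ - K z₂| ≤ L * |z₁ - z₂|)
    (h : ℕ → ℝ)
    (ζ : ℝ) (hζ : 1 ≤ ζ)
    (hlim : Tendsto (fun N : ℕ => (N : ℝ) / h N) atTop (nhds ζ))
    (m₀ : ℝ → ℝ) (hm₀_cont : Continuous m₀)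
    (q : ℕ)
    (a : ℝ) (ha : a ∈ Set.Ioo (0 : ℝ) 1) :
    TendstoUniformlyOn
      (fun (N : ℕ) (s : ℝ) =>
        Real.sqrt (h N) / (N : ℝ) ^ ((3 : ℝ) / 2) *
          ∑ i ∈ Finset.Icc 1 ⌊(N : ℝ) * s⌋₊,
            (1 / h N) * K (((i : ℝ) - (⌊(N : ℝ) * s⌋₊ : ℝ)) / h N) *
              ∑ j ∈ Finset.Icc 1 (i - 1), m₀ (((j : ℝ) - (q : ℝ)) / h N))
      (fun s : ℝ =>
        (Real.sqrt ζ)⁻¹ *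
          ∫ r in (0 : ℝ)..s, K (ζ * (r - s)) * ∫ t in (0 : ℝ)..(ζ * r), m₀ t)
      atTop (Set.Icc a 1) := by
  have hK : Continuous K := (LipschitzWith.of_dist_le' (K := L) hK_lip).continuous
  have hsummand := tendstoUniformlyOn_drift_summand hK_lip (by linarith) hlim hm₀_cont (1 - q)
  refine (((tendstoUniformlyOn_riemannSum_of_tendstoUniformlyOn (by fun_prop) hsummand).congr_right
    fun s _ => ?_).congr ?_).mono (Icc_subset_Icc_left ha.1.le)
  · simp [mul_assoc, intervalIntegral.integral_const_mul]
  · filter_upwards [eventually_ne_atTop 0] with N hN s _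
    exact (drift_sum_eq_riemannSum K m₀ (h N) q hN _).symm

/-- Under assumption (K), a bandwidth sequence with `N/h_N → ζ ∈ [1,∞)`,
a generic alternative `m₀`, a fixed change point `q ∈ ℕ` (model CP1), and `a ∈ (0,1)`,
the functions
`μ_N(s) = h_N^{1/2} N^{−3/2} ∑_{i=1}^{⌊Ns⌋} (1/h_N) K((i−⌊Ns⌋)/h_N) ∑_{j=1}^{i−1} m₀((j−q)/h_N)`
converge uniformly on `[a,1]` to `s ↦ ζ^{−1/2} ∫_0^s K(ζ(r−s)) (∫_0^{ζr} m₀(t) dt) dr`. -/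
theorem drift_term_uniform_convergence_CP1
    (K : ℝ → ℝ) (L : ℝ)
    (hK_lip : ∀ z₁ z₂ : ℝ, |K z₁ - K z₂| ≤ L * |z₁ - z₂|)
    (hK_nonneg : ∀ z, 0 ≤ K z)
    (hK_int : Integrable K)
    (hK_dens : ∫ z, K z = 1)
    (hK_mean_int : Integrable (fun z => z * K z))
    (hK_mean : ∫ z, z * K z = 0)
    (hK_var : Integrable (fun z => z ^ 2 * K z))
    (h : ℕ → ℝ) (hpos : ∀ N, 0 < h N)
    (ζ : ℝ) (hζ : 1 ≤ ζ)
    (hlim : Tendsto (fun N : ℕ => (N : ℝ) / h N) atTop (nhds ζ))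
    (m₀ : ℝ → ℝ) (hm₀_cont : Continuous m₀)
    (hm₀_zero : ∀ t : ℝ, t ≤ 0 → m₀ t = 0)
    (hm₀_nonneg : ∀ t : ℝ, 0 < t → 0 ≤ m₀ t)
    (q : ℕ)
    (a : ℝ) (ha : a ∈ Set.Ioo (0 : ℝ) 1) :
    TendstoUniformlyOn
      (fun (N : ℕ) (s : ℝ) =>
        Real.sqrt (h N) / (N : ℝ) ^ ((3 : ℝ) / 2) *
          ∑ i ∈ Finset.Icc 1 ⌊(N : ℝ) * s⌋₊,
            (1 / h N) * K (((i : ℝ) - (⌊(N : ℝ) * s⌋₊ : ℝ)) / h N) *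
              ∑ j ∈ Finset.Icc 1 (i - 1), m₀ (((j : ℝ) - (q : ℝ)) / h N))
      (fun s : ℝ =>
        (Real.sqrt ζ)⁻¹ *
          ∫ r in (0 : ℝ)..s, K (ζ * (r - s)) * ∫ t in (0 : ℝ)..(ζ * r), m₀ t)
      atTop (Set.Icc a 1) :=
  drift_term_uniform_convergence_CP1_general K L hK_lip h ζ hζ hlim m₀ hm₀_cont q a ha
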